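/- arXiv:1511.00545 — 2 statements merged into one kernel-verified Lean document; each statement's English description precedes it below -/
import Mathlib

section
/- Let a, b be odd natural numbers with gcd(a,b) = 1, let e_p = e^{πi/p} viewed as a unit quaternion e^{πi/p} = cos(π/p) + sin(π/p)·i, and let H_{a,b} ≤ SO(4) be the subgroup generated by the rotations [e_a,1], [1,e_b], [1,j], [j,1] (where [l,r] denotes x ↦ l x r̄). Then H_{a,b} is a finite group of order 8ab. -/
open Quaternion Real

noncomputable section
open scoped Classical

/-- The linear map `x ↦ l · x · r̄` on `ℍ ≅ ℝ⁴`. -/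
def qRot (l r : ℍ[ℝ]) : ℍ[ℝ] →ₗ[ℝ] ℍ[ℝ] where
  toFun x := l * x * star r
  map_add' x y := by simp [mul_add, add_mul]
  map_smul' c x := by simp [mul_smul_comm, smul_mul_assoc]

/-- The rotation `[l,r] : x ↦ l · x · r̄` as an invertible linear map of `ℝ⁴ ≅ ℍ`
(for `l, r ≠ 0`; junk value `1` otherwise). -/
def qRotUnit (l r : ℍ[ℝ]) : (ℍ[ℝ] →ₗ[ℝ] ℍ[ℝ])ˣ :=
  if h : l ≠ 0 ∧ r ≠ 0 then
    { val := qRot l r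
      inv := qRot l⁻¹ r⁻¹
      val_inv := by
        apply LinearMap.ext; intro x
        show l * (l⁻¹ * x * star r⁻¹) * star r = x
        have h1 : star (r⁻¹ : ℍ[ℝ]) * star r = 1 := by
          rw [← star_mul, mul_inv_cancel₀ h.2, star_one]
        have h2 : l * l⁻¹ = 1 := mul_inv_cancel₀ h.1
        calc l * (l⁻¹ * x * star r⁻¹) * star r
            = (l * l⁻¹) * x * (star r⁻¹ * star r) := by noncomm_ring
          _ = x := by rw [h1, h2, one_mul, mul_one]
      inv_val := by
        apply LinearMap.ext; intro x
        show l⁻¹ * (l * x * star r) * star r⁻¹ = x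
        have h1 : star r * star (r⁻¹ : ℍ[ℝ]) = 1 := by
          rw [← star_mul, inv_mul_cancel₀ h.2, star_one]
        have h2 : l⁻¹ * l = 1 := inv_mul_cancel₀ h.1
        calc l⁻¹ * (l * x * star r) * star r⁻¹
            = (l⁻¹ * l) * x * (star r * star r⁻¹) := by noncomm_ring
          _ = x := by rw [h1, h2, one_mul, mul_one] }
  else 1

/-- The unit quaternion `e_p = cos(π/p) + sin(π/p)·i`. -/
def eQ (p : ℕ) : ℍ[ℝ] := ⟨Real.cos (π / p), Real.sin (π / p), 0, 0⟩

/-- The quaternion unit `j`. -/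
def jQ : ℍ[ℝ] := ⟨0, 0, 1, 0⟩

/-- The group `H_{a,b} = ⟨[e_a,1], [1,e_b], [1,j], [j,1]⟩`. -/
def Hgrp (a b : ℕ) : Subgroup (ℍ[ℝ] →ₗ[ℝ] ℍ[ℝ])ˣ :=
  Subgroup.closure {qRotUnit (eQ a) 1, qRotUnit 1 (eQ b), qRotUnit 1 jQ, qRotUnit jQ 1}

/-! `H_{a,b}` is the image of `A_a × A_b` under the rotation homomorphism `(l, r) ↦ [l, r]`,
where `A_n = ⟨e_n, j⟩ ≤ ℍˣ`. Since `e_n` has order `2n`, `j² = e_nⁿ = -1` and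
`e_n j = j e_n⁻¹`, the dicyclic group `QuaternionGroup n` maps onto `A_n`, injectively because `j`
is not a power of `e_n`; so `|A_n| = 4n`. A pair of unit quaternions acts trivially on `ℍ` only
if both are the same central unit, i.e. `±1`, so the kernel has order `2` and
`|H_{a,b}| = 16ab / 2`. -/

section Dicyclic

variable {G : Type*} [Group G] {m n : ℕ} {x y : G}

def zmodPow (x : G) (hx : x ^ m = 1) (i : ZMod m) : G :=
  (ZMod.lift m ⟨zmultiplesHom (Additive G) (.ofMul x), by
    rw [zmultiplesHom_apply, natCast_zsmul, ← ofMul_pow, hx, ofMul_one]⟩ i).toMul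

@[simp]
theorem zmodPow_intCast (hx : x ^ m = 1) (k : ℤ) : zmodPow x hx k = x ^ k := by
  simp [zmodPow, ZMod.lift_coe]

theorem zpow_mul_eq_mul_zpow_neg (hxy : x * y = y * x⁻¹) (k : ℤ) :
    x ^ k * y = y * x ^ (-k) := by
  rw [zpow_neg, ← inv_zpow]
  exact (SemiconjBy.zpow_right hxy.symm k).eq.symm

namespace QuaternionGroup

def lift (hx : x ^ (2 * n) = 1) (hy : y ^ 2 = x ^ n) (hxy : x * y = y * x⁻¹) :
    QuaternionGroup n →* G where
  toFun
    | a i => zmodPow x hx i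
    | xa i => y * zmodPow x hx i
  map_one' := by
    show zmodPow x hx 0 = 1
    rw [← Int.cast_zero, zmodPow_intCast, zpow_zero]
  map_mul' := by
    rintro (i | i) (j | j) <;>
      obtain ⟨i, rfl⟩ := ZMod.intCast_surjective i <;>
      obtain ⟨j, rfl⟩ := ZMod.intCast_surjective j
    · rw [a_mul_a, ← Int.cast_add]
      simp only [zmodPow_intCast, zpow_add]
    · rw [a_mul_xa, ← Int.cast_sub]
      simp only [zmodPow_intCast]
      rw [← mul_assoc, zpow_mul_eq_mul_zpow_neg hxy, mul_assoc, ← zpow_add, neg_add_eq_sub]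
    · rw [xa_mul_a, ← Int.cast_add]
      simp only [zmodPow_intCast, zpow_add, mul_assoc]
    · rw [xa_mul_xa, ← Int.cast_natCast, ← Int.cast_add, ← Int.cast_sub]
      simp only [zmodPow_intCast]
      rw [mul_assoc, ← mul_assoc (x ^ i), zpow_mul_eq_mul_zpow_neg hxy, ← mul_assoc, ← mul_assoc,
        ← sq, hy, mul_assoc, ← zpow_natCast, ← zpow_add, ← zpow_add]
      ring_nf

variable (hx : x ^ (2 * n) = 1) (hy : y ^ 2 = x ^ n) (hxy : x * y = y * x⁻¹)

@[simp]
theorem lift_a (i : ZMod (2 * n)) : lift hx hy hxy (a i) = zmodPow x hx i := rfl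

@[simp]
theorem lift_xa (i : ZMod (2 * n)) : lift hx hy hxy (xa i) = y * zmodPow x hx i := rfl

theorem lift_injective (hord : orderOf x = 2 * n) (hyx : y ∉ Subgroup.zpowers x) :
    Function.Injective (lift hx hy hxy) := by
  refine (injective_iff_map_eq_one _).mpr ?_
  rintro (i | i) h <;> obtain ⟨k, rfl⟩ := ZMod.intCast_surjective i
  · replace h : x ^ k = 1 := by simpa using h
    rw [(ZMod.intCast_zmod_eq_zero_iff_dvd k (2 * n)).mpr, a_zero]
    exact_mod_cast hord ▸ orderOf_dvd_iff_zpow_eq_one.mpr h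
  · replace h : y * x ^ k = 1 := by simpa using h
    exact absurd (eq_inv_of_mul_eq_one_left h ▸ inv_mem (Subgroup.zpow_mem_zpowers x k)) hyx

theorem range_lift : (lift hx hy hxy).range = Subgroup.closure {x, y} := by
  have hx_mem : x ∈ Subgroup.closure {x, y} := Subgroup.subset_closure (by simp)
  have hy_mem : y ∈ Subgroup.closure {x, y} := Subgroup.subset_closure (by simp)
  apply le_antisymm
  · rintro _ ⟨i | i, rfl⟩ <;> obtain ⟨k, rfl⟩ := ZMod.intCast_surjective i
    · simpa using zpow_mem hx_mem k
    · simpa using mul_mem hy_mem (zpow_mem hx_mem k)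
  · rw [Subgroup.closure_le]
    rintro _ (rfl | rfl)
    · exact ⟨a ((1 : ℤ) : ZMod (2 * n)), by rw [lift_a, zmodPow_intCast, zpow_one]⟩
    · exact ⟨xa ((0 : ℤ) : ZMod (2 * n)), by rw [lift_xa, zmodPow_intCast, zpow_zero, mul_one]⟩

end QuaternionGroup

theorem Subgroup.card_closure_pair_of_dicyclic [NeZero n] (hord : orderOf x = 2 * n)
    (hy : y ^ 2 = x ^ n) (hxy : x * y = y * x⁻¹) (hyx : y ∉ zpowers x) :
    Nat.card (closure {x, y}) = 4 * n := by
  have hx : x ^ (2 * n) = 1 := hord ▸ pow_orderOf_eq_one x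
  rw [← QuaternionGroup.range_lift hx hy hxy,
    ← Nat.card_congr
      (MonoidHom.ofInjective (QuaternionGroup.lift_injective hx hy hxy hord hyx)).toEquiv,
    Nat.card_eq_fintype_card, QuaternionGroup.card]

end Dicyclic

theorem Subgroup.closure_image_inl_union_image_inr {G N : Type*} [Group G] [Group N] (s : Set G)
    (t : Set N) :
    closure (MonoidHom.inl G N '' s ∪ MonoidHom.inr G N '' t) = (closure s).prod (closure t) := by
  apply le_antisymm
  · rw [closure_le]
    rintro _ (⟨x, hx, rfl⟩ | ⟨y, hy, rfl⟩)
    · exact mem_prod.mpr ⟨subset_closure hx, one_mem _⟩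
    · exact mem_prod.mpr ⟨one_mem _, subset_closure hy⟩
  · rw [prod_le_iff, MonoidHom.map_closure, MonoidHom.map_closure]
    exact ⟨closure_mono Set.subset_union_left, closure_mono Set.subset_union_right⟩

theorem Subgroup.card_map_mul_card_ker_inf {G N : Type*} [Group G] [Group N] (f : G →* N)
    (K : Subgroup G) : Nat.card (K.map f) * Nat.card ↥(f.ker ⊓ K) = Nat.card K := by
  rw [← Nat.card_congr (subgroupOfEquivOfLe inf_le_right).toEquiv, inf_subgroupOf_right,
    ← MonoidHom.ker_domRestrict, ← MonoidHom.domRestrict_range, ← index_ker, mul_comm,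
    card_mul_index]

-- `jQ` and `eQ` are built with the `QuaternionAlgebra` constructor, which the `Quaternion` simp
-- lemmas do not see through.
@[simp] theorem re_jQ : jQ.re = 0 := rfl
@[simp] theorem imI_jQ : jQ.imI = 0 := rfl
@[simp] theorem imJ_jQ : jQ.imJ = 1 := rfl
@[simp] theorem imK_jQ : jQ.imK = 0 := rfl

@[simp] theorem re_eQ (n : ℕ) : (eQ n).re = Real.cos (π / n) := rfl
@[simp] theorem imI_eQ (n : ℕ) : (eQ n).imI = Real.sin (π / n) := rfl
@[simp] theorem imJ_eQ (n : ℕ) : (eQ n).imJ = 0 := rfl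
@[simp] theorem imK_eQ (n : ℕ) : (eQ n).imK = 0 := rfl

theorem Quaternion.eq_coe_re_of_forall_commute {q : ℍ[ℝ]} (h : ∀ x, Commute q x) :
    q = (q.re : ℍ[ℝ]) := by
  have hi := Quaternion.ext_iff.mp (h (Complex.I : ℂ)).eq
  have hj := Quaternion.ext_iff.mp (h jQ).eq
  simp only [re_mul, re_coeComplex, Complex.I_re, mul_zero, imI_coeComplex, Complex.I_im, mul_one,
    zero_sub, imJ_coeComplex, sub_zero, imK_coeComplex, zero_mul, one_mul, imI_mul, add_zero,
    zero_add, imJ_mul, sub_self, imK_mul, true_and, re_jQ, imI_jQ, imJ_jQ, imK_jQ] at hi hj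
  ext <;> simp only [re_coe, imI_coe, imJ_coe, imK_coe] <;> linarith

theorem eQ_eq_ofComplex (n : ℕ) : eQ n = ofComplex (Complex.exp (↑(π / n) * Complex.I)) := by
  ext <;> simp only [coe_ofComplex, re_coeComplex, imI_coeComplex, imJ_coeComplex,
    imK_coeComplex, Complex.exp_ofReal_mul_I_re, Complex.exp_ofReal_mul_I_im, re_eQ, imI_eQ,
    imJ_eQ, imK_eQ]

theorem isPrimitiveRoot_exp_pi_div {n : ℕ} (hn : n ≠ 0) :
    IsPrimitiveRoot (Complex.exp (↑(π / n) * Complex.I)) (2 * n) := by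
  convert Complex.isPrimitiveRoot_exp (2 * n) (by omega) using 2
  push_cast
  field_simp

theorem exp_pi_div_pow_self {n : ℕ} (hn : n ≠ 0) :
    Complex.exp (↑(π / n) * Complex.I) ^ n = -1 := by
  rw [← Complex.exp_nat_mul, ← Complex.exp_pi_mul_I]
  congr 1
  push_cast
  field_simp

theorem normSq_eQ (n : ℕ) : normSq (eQ n) = 1 := by
  simp [Quaternion.normSq_def', Real.cos_sq_add_sin_sq]

theorem jQ_mul_jQ : jQ * jQ = -1 := by
  ext <;> simp [Quaternion.re_mul, Quaternion.imI_mul, Quaternion.imJ_mul, Quaternion.imK_mul]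

theorem coe_qRotUnit {l r : ℍ[ℝ]} (hl : l ≠ 0) (hr : r ≠ 0) :
    (qRotUnit l r : ℍ[ℝ] →ₗ[ℝ] ℍ[ℝ]) = qRot l r := by
  simp [qRotUnit, hl, hr]

theorem qRotUnit_apply {l r : ℍ[ℝ]} (hl : l ≠ 0) (hr : r ≠ 0) (x : ℍ[ℝ]) :
    (qRotUnit l r : ℍ[ℝ] →ₗ[ℝ] ℍ[ℝ]) x = l * x * star r := by
  rw [coe_qRotUnit hl hr]
  rfl

def qRotHom : ℍ[ℝ]ˣ × ℍ[ℝ]ˣ →* (ℍ[ℝ] →ₗ[ℝ] ℍ[ℝ])ˣ where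
  toFun p := qRotUnit p.1 p.2
  map_one' := Units.ext <| LinearMap.ext fun x => by
    simp [qRotUnit_apply one_ne_zero one_ne_zero]
  map_mul' p q := Units.ext <| LinearMap.ext fun x => by
    change (qRotUnit ↑(p * q).1 ↑(p * q).2 : ℍ[ℝ] →ₗ[ℝ] ℍ[ℝ]) x =
      (qRotUnit p.1 p.2 : ℍ[ℝ] →ₗ[ℝ] ℍ[ℝ]) ((qRotUnit q.1 q.2 : ℍ[ℝ] →ₗ[ℝ] ℍ[ℝ]) x)
    rw [qRotUnit_apply (p * q).1.ne_zero (p * q).2.ne_zero, qRotUnit_apply p.1.ne_zero p.2.ne_zero,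
      qRotUnit_apply q.1.ne_zero q.2.ne_zero]
    simp only [Prod.fst_mul, Prod.snd_mul, Units.val_mul, star_mul]
    noncomm_ring

theorem qRotHom_apply (p : ℍ[ℝ]ˣ × ℍ[ℝ]ˣ) : qRotHom p = qRotUnit p.1 p.2 := rfl

theorem eq_one_or_eq_neg_one_of_qRot_eq_one {l r : ℍ[ℝ]} (hl : normSq l = 1)
    (h : qRot l r = 1) : (l = 1 ∧ r = 1) ∨ (l = -1 ∧ r = -1) := by
  have hfix (x : ℍ[ℝ]) : l * x * star r = x := LinearMap.congr_fun h x
  have hl0 : l ≠ 0 := by rintro rfl; simp at hl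
  have hsr : star r = l⁻¹ := (inv_eq_of_mul_eq_one_right (by simpa using hfix 1)).symm
  have hcomm (x : ℍ[ℝ]) : Commute l x := by
    have := hfix x
    rwa [hsr, mul_inv_eq_iff_eq_mul₀ hl0] at this
  have hre : l = l.re := Quaternion.eq_coe_re_of_forall_commute hcomm
  have hsq : l.re * l.re = 1 := by
    rw [hre, Quaternion.normSq_coe] at hl
    simpa [sq] using hl
  have hr : r = l⁻¹ := by rw [← star_star r, hsr, star_inv₀, hre, Quaternion.star_coe]
  rcases mul_self_eq_one_iff.mp hsq with h1 | h1 <;> rw [h1] at hre <;> simp [hre, hr]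

def eU (n : ℕ) : ℍ[ℝ]ˣ := Units.mk0 (eQ n) fun h => by simpa [h] using normSq_eQ n

def jU : ℍ[ℝ]ˣ := Units.mk0 jQ fun h => by simpa [h] using jQ_mul_jQ

theorem jU_sq : jU ^ 2 = -1 := Units.ext <| by simp [jU, sq, jQ_mul_jQ]

theorem eU_pow_self {n : ℕ} (hn : n ≠ 0) : eU n ^ n = -1 := Units.ext <| by
  rw [Units.val_pow_eq_pow_val, eU, Units.val_mk0, eQ_eq_ofComplex, ← map_pow,
    exp_pi_div_pow_self hn, map_neg, map_one, Units.val_neg, Units.val_one]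

theorem orderOf_eU {n : ℕ} (hn : n ≠ 0) : orderOf (eU n) = 2 * n := by
  rw [← orderOf_units, eU, Units.val_mk0, eQ_eq_ofComplex,
    (isPrimitiveRoot_exp_pi_div hn).eq_orderOf]
  exact orderOf_injective ofComplex.toMonoidHom ofComplex.toRingHom.injective _

theorem eU_mul_jU (n : ℕ) : eU n * jU = jU * (eU n)⁻¹ := Units.ext <| by
  simp only [eU, jU, Units.val_mul, Units.val_inv_eq_inv_val, Units.val_mk0, Quaternion.inv_def,
    normSq_eQ, inv_one, one_smul]
  ext <;> simp [Quaternion.re_mul, Quaternion.imI_mul, Quaternion.imJ_mul, Quaternion.imK_mul]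

theorem jU_notMem_zpowers_eU (n : ℕ) : jU ∉ Subgroup.zpowers (eU n) := by
  rintro ⟨k, hk⟩
  have := congrArg Units.val hk
  rw [Units.val_zpow_eq_zpow_val, eU, jU, Units.val_mk0, Units.val_mk0, eQ_eq_ofComplex,
    ← map_zpow₀] at this
  exact zero_ne_one <| by
    simpa only [coe_ofComplex, imJ_coeComplex, imJ_jQ] using congrArg QuaternionAlgebra.imJ this

def binaryDihedral (n : ℕ) : Subgroup ℍ[ℝ]ˣ := Subgroup.closure {eU n, jU}

theorem card_binaryDihedral {n : ℕ} (hn : n ≠ 0) : Nat.card (binaryDihedral n) = 4 * n :=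
  have : NeZero n := ⟨hn⟩
  Subgroup.card_closure_pair_of_dicyclic (orderOf_eU hn) (jU_sq.trans (eU_pow_self hn).symm)
    (eU_mul_jU n) (jU_notMem_zpowers_eU n)

theorem neg_one_mem_binaryDihedral (n : ℕ) : -1 ∈ binaryDihedral n :=
  jU_sq ▸ pow_mem (Subgroup.subset_closure (by simp)) 2

theorem normSq_of_mem_binaryDihedral {n : ℕ} {u : ℍ[ℝ]ˣ} (hu : u ∈ binaryDihedral n) :
    normSq (u : ℍ[ℝ]) = 1 := by
  induction hu using Subgroup.closure_induction with
  | mem u hu =>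
    rcases hu with rfl | rfl
    · exact normSq_eQ n
    · simp [jU, Quaternion.normSq_def']
  | one => simp
  | mul u v _ _ hu hv => simp [hu, hv]
  | inv u _ hu => simp [Units.val_inv_eq_inv_val, hu]

theorem Hgrp_eq_map_qRotHom (a b : ℕ) :
    Hgrp a b = ((binaryDihedral a).prod (binaryDihedral b)).map qRotHom := by
  rw [binaryDihedral, binaryDihedral, ← Subgroup.closure_image_inl_union_image_inr,
    MonoidHom.map_closure, Hgrp]
  congr 1
  ext
  simp only [Set.image_union, Set.image_insert_eq, Set.image_singleton, Set.mem_insert_iff,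
    Set.mem_singleton_iff, Set.mem_union, qRotHom_apply, MonoidHom.inl_apply,
    MonoidHom.inr_apply, eU, jU, Units.val_mk0, Units.val_one]
  tauto

theorem qRotHom_ker_inf_prod_binaryDihedral (a b : ℕ) :
    qRotHom.ker ⊓ (binaryDihedral a).prod (binaryDihedral b) = Subgroup.zpowers (-1, -1) := by
  apply le_antisymm
  · rintro ⟨l, r⟩ ⟨hker, hl, -⟩
    replace hl : l ∈ binaryDihedral a := hl
    have hrot : qRot l r = 1 := by
      rw [← coe_qRotUnit l.ne_zero r.ne_zero]
      exact congrArg Units.val hker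
    rcases eq_one_or_eq_neg_one_of_qRot_eq_one (normSq_of_mem_binaryDihedral hl) hrot with
      ⟨hl1, hr1⟩ | ⟨hl1, hr1⟩
    · obtain rfl : l = 1 := Units.ext hl1
      obtain rfl : r = 1 := Units.ext hr1
      exact one_mem _
    · obtain rfl : l = -1 := Units.ext (by simpa using hl1)
      obtain rfl : r = -1 := Units.ext (by simpa using hr1)
      exact Subgroup.mem_zpowers _
  · rw [Subgroup.zpowers_le]
    refine ⟨?_, neg_one_mem_binaryDihedral a, neg_one_mem_binaryDihedral b⟩
    exact Units.ext <| LinearMap.ext fun x => by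
      rw [qRotHom_apply, qRotUnit_apply (Units.ne_zero _) (Units.ne_zero _)]
      simp

theorem orderOf_neg_one_neg_one : orderOf ((-1, -1) : ℍ[ℝ]ˣ × ℍ[ℝ]ˣ) = 2 := by
  refine orderOf_eq_prime (Prod.ext neg_one_sq neg_one_sq) fun h => ?_
  have := congrArg (fun p : ℍ[ℝ]ˣ × ℍ[ℝ]ˣ => (p.1 : ℍ[ℝ]).re) h
  norm_num at this

theorem Hgrp_card_general (a b : ℕ) (ha : Odd a) (hb : Odd b) :
    Nat.card (Hgrp a b) = 8 * a * b := by
  have hcount :=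
    Subgroup.card_map_mul_card_ker_inf qRotHom ((binaryDihedral a).prod (binaryDihedral b))
  rw [← Hgrp_eq_map_qRotHom, qRotHom_ker_inf_prod_binaryDihedral, Nat.card_zpowers,
    orderOf_neg_one_neg_one, Nat.card_congr (Subgroup.prodEquiv _ _).toEquiv, Nat.card_prod,
    card_binaryDihedral ha.pos.ne', card_binaryDihedral hb.pos.ne'] at hcount
  linarith

/-- For `a, b` odd and coprime, the group `H_{a,b} ≤ SO(4)` generated by
`[e_a,1], [1,e_b], [1,j], [j,1]` is a finite group of order `8ab`. -/
theorem Hgrp_card (a b : ℕ) (ha : Odd a) (hb : Odd b) (hab : Nat.Coprime a b) :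
    Nat.card (Hgrp a b) = 8 * a * b :=
  Hgrp_card_general a b ha hb

end
end

section
/- In the group H_{a,b} = ⟨[e_a,1],[1,e_b],[1,j],[j,1]⟩ ≤ SO(4) (a, b odd, coprime), every element of the form h = [e_a,1]^{k₁}[1,e_b]^{k₂}[1,j][j,1] is conjugate in H_{a,b} either to [j,j] or to -[j,j] = [1,j]²[j,j]; specifically h = h̃ · ([1,j]²)^{k₁+k₂} [1,j][j,1] · h̃⁻¹ with h̃ = [e_a,1]^{k₁(a+1)/2}[1,e_b]^{k₂(b+1)/2}. -/
open Quaternion Real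

noncomputable section
open scoped Classical

/-!
Write `A = [e_a,1]`, `B = [1,e_b]`, `J = [1,j]`, `K = [j,1]` and `z = J² = -1`. Then `JK` inverts
both `A` and `B`, and `z = A^a = B^b` is central of order two. Conjugating `z^s JK` by
`g = A^m B^n` therefore gives `z^s g² JK`, and for `m = k₁(a+1)/2`, `n = k₂(b+1)/2` with `a, b`
odd, `g² = z^{k₁+k₂} A^{k₁} B^{k₂}`; taking `s = k₁ + k₂` the powers of `z` cancel.
-/

structure HRelations {G : Type*} [Group G] (a b : ℕ) (A B J K : G) : Prop where
  commute_A_B : Commute A B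
  commute_A_J : Commute A J
  commute_B_K : Commute B K
  A_mul_K_mul_A : A * K * A = K
  B_mul_J_mul_B : B * J * B = J
  A_pow : A ^ a = J ^ 2
  B_pow : B ^ b = J ^ 2

theorem semiconjBy_inv_of_mul_mul_eq {G : Type*} [Group G] {x y : G} (h : x * y * x = y) :
    SemiconjBy y x x⁻¹ := by
  rw [SemiconjBy, eq_inv_mul_iff_mul_eq, ← mul_assoc, h]

theorem pow_eq_one_or_eq_self_of_sq_eq_one {M : Type*} [Monoid M] {x : M} (hx : x ^ 2 = 1)
    (n : ℕ) : x ^ n = 1 ∨ x ^ n = x := by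
  rcases Nat.even_or_odd' n with ⟨k, rfl | rfl⟩
  · left; rw [pow_mul, hx, one_pow]
  · right; rw [pow_succ, pow_mul, hx, one_pow, one_mul]

theorem pow_two_mul_mul_succ_div_two {M : Type*} [Monoid M] (x : M) {a : ℕ} (ha : Odd a)
    (k : ℕ) : x ^ (2 * (k * ((a + 1) / 2))) = (x ^ a) ^ k * x ^ k := by
  obtain ⟨c, rfl⟩ := ha
  rw [← pow_mul, ← pow_add]
  congr 1
  have : (2 * c + 1 + 1) / 2 = c + 1 := by omega
  rw [this]; ring

namespace HRelations

variable {G : Type*} [Group G] {a b : ℕ} {A B J K : G}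

theorem sq_sq_eq_one (h : HRelations a b A B J K) : (J ^ 2) ^ 2 = 1 := by
  have hJ : J * J ^ 2 = (J ^ 2)⁻¹ * J := by
    simpa only [inv_pow, h.B_pow] using
      ((semiconjBy_inv_of_mul_mul_eq h.B_mul_J_mul_B).pow_right b).eq
  calc (J ^ 2) ^ 2 = J ^ 2 * (J * J ^ 2) * J⁻¹ := by group
    _ = 1 := by rw [hJ]; group

theorem semiconjBy_pow_mul_pow (h : HRelations a b A B J K) (m n : ℕ) :
    SemiconjBy (J * K) (A ^ m * B ^ n) (A ^ m * B ^ n)⁻¹ := by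
  have hA : SemiconjBy (J * K) A A⁻¹ :=
    SemiconjBy.mul_left h.commute_A_J.symm.inv_right
      (semiconjBy_inv_of_mul_mul_eq h.A_mul_K_mul_A)
  have hB : SemiconjBy (J * K) B B⁻¹ :=
    (semiconjBy_inv_of_mul_mul_eq h.B_mul_J_mul_B).mul_left h.commute_B_K.symm
  have := (hA.pow_right m).mul_right (hB.pow_right n)
  rwa [inv_pow, inv_pow, ← mul_inv_rev, ← (h.commute_A_B.pow_pow m n).eq] at this

theorem conj_eq (h : HRelations a b A B J K) (ha : Odd a) (hb : Odd b) (k₁ k₂ : ℕ) :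
    A ^ k₁ * B ^ k₂ * J * K =
      (A ^ (k₁ * ((a + 1) / 2)) * B ^ (k₂ * ((b + 1) / 2))) * ((J ^ 2) ^ (k₁ + k₂) * (J * K)) *
        (A ^ (k₁ * ((a + 1) / 2)) * B ^ (k₂ * ((b + 1) / 2)))⁻¹ := by
  set g := A ^ (k₁ * ((a + 1) / 2)) * B ^ (k₂ * ((b + 1) / 2))
  have hzA : Commute (J ^ 2) A := h.A_pow ▸ Commute.pow_self A a
  have hzB : Commute (J ^ 2) B := h.B_pow ▸ Commute.pow_self B b
  have hzg : Commute ((J ^ 2) ^ (k₁ + k₂)) g :=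
    ((hzA.pow_right _).mul_right (hzB.pow_right _)).pow_left _
  have hg2 : g ^ 2 = (J ^ 2) ^ (k₁ + k₂) * (A ^ k₁ * B ^ k₂) := by
    rw [(h.commute_A_B.pow_pow _ _).mul_pow, ← pow_mul, ← pow_mul, mul_comm _ 2, mul_comm _ 2,
      pow_two_mul_mul_succ_div_two A ha, pow_two_mul_mul_succ_div_two B hb, h.A_pow, h.B_pow,
      mul_assoc, (hzA.pow_pow k₂ k₁).symm.left_comm, ← mul_assoc, ← pow_add]
  have hz : (J ^ 2) ^ (k₁ + k₂) * (J ^ 2) ^ (k₁ + k₂) = 1 := by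
    rw [← pow_add, ← two_mul, pow_mul, h.sq_sq_eq_one, one_pow]
  have hJK : J * K * g⁻¹ = g * (J * K) := by
    simpa only [inv_inv] using
      (h.semiconjBy_pow_mul_pow (k₁ * ((a + 1) / 2)) (k₂ * ((b + 1) / 2))).inv_right.eq
  symm
  calc g * ((J ^ 2) ^ (k₁ + k₂) * (J * K)) * g⁻¹
      = g * (J ^ 2) ^ (k₁ + k₂) * (g * (J * K)) := by simp only [mul_assoc, hJK]
    _ = (J ^ 2) ^ (k₁ + k₂) * g ^ 2 * (J * K) := by
        rw [← hzg.eq, sq g]; simp only [mul_assoc]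
    _ = A ^ k₁ * B ^ k₂ * J * K := by
        rw [hg2, ← mul_assoc ((J ^ 2) ^ (k₁ + k₂)), hz, one_mul, mul_assoc _ J]

theorem exists_conj (h : HRelations a b A B J K) (ha : Odd a) (hb : Odd b) (k₁ k₂ : ℕ) :
    ∃ g ∈ Subgroup.closure {A, B, J, K},
      A ^ k₁ * B ^ k₂ * J * K = g * (J * K) * g⁻¹ ∨
        A ^ k₁ * B ^ k₂ * J * K = g * (J ^ 2 * (J * K)) * g⁻¹ := by
  refine ⟨A ^ (k₁ * ((a + 1) / 2)) * B ^ (k₂ * ((b + 1) / 2)),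
    mul_mem (pow_mem (Subgroup.subset_closure (by simp)) _)
      (pow_mem (Subgroup.subset_closure (by simp)) _), ?_⟩
  rw [h.conj_eq ha hb k₁ k₂]
  rcases pow_eq_one_or_eq_self_of_sq_eq_one h.sq_sq_eq_one (k₁ + k₂) with hz | hz
  · left; rw [hz, one_mul]
  · right; rw [hz]

end HRelations

theorem jQ_ne_zero : jQ ≠ 0 := fun h => by simpa [jQ] using congrArg QuaternionAlgebra.imJ h

theorem jQ_sq : jQ ^ 2 = -1 := by
  ext <;> simp only [sq, re_mul, imI_mul, imJ_mul, imK_mul] <;> simp [jQ]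

theorem eQ_eq_coeComplex (p : ℕ) : eQ p = ↑(Complex.exp (↑(π / p) * Complex.I)) := by
  ext
  · exact (Complex.exp_ofReal_mul_I_re _).symm
  · exact (Complex.exp_ofReal_mul_I_im _).symm
  · rfl
  · rfl

theorem eQ_pow_self {p : ℕ} (hp : p ≠ 0) : eQ p ^ p = -1 := by
  have hπ : (p : ℂ) * ↑(π / p) = π := by push_cast; field_simp
  rw [eQ_eq_coeComplex, ← coe_ofComplex, ← map_pow, ← Complex.exp_nat_mul, ← mul_assoc, hπ,
    Complex.exp_pi_mul_I, map_neg, map_one]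

theorem eQ_mul_jQ_mul_eQ (p : ℕ) : eQ p * jQ * eQ p = jQ := by
  ext <;> simp only [re_mul, imI_mul, imJ_mul, imK_mul] <;> simp [eQ, jQ] <;>
    nlinarith [sin_sq_add_cos_sq (π / p)]

theorem eQ_ne_zero (p : ℕ) : eQ p ≠ 0 := fun h =>
  jQ_ne_zero (by simpa [h] using (eQ_mul_jQ_mul_eQ p).symm)

section qRotUnit

variable {l r l' r' : ℍ[ℝ]}

theorem qRotUnit_val (hl : l ≠ 0) (hr : r ≠ 0) : (qRotUnit l r : ℍ[ℝ] →ₗ[ℝ] ℍ[ℝ]) = qRot l r := by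
  rw [qRotUnit, dif_pos ⟨hl, hr⟩]

theorem qRotUnit_mul (hl : l ≠ 0) (hr : r ≠ 0) (hl' : l' ≠ 0) (hr' : r' ≠ 0) :
    qRotUnit l r * qRotUnit l' r' = qRotUnit (l * l') (r * r') := by
  refine Units.ext <| LinearMap.ext fun x => ?_
  simp [qRotUnit_val, hl, hr, hl', hr', qRot, mul_assoc]

theorem qRotUnit_one : qRotUnit 1 1 = 1 :=
  Units.ext <| LinearMap.ext fun x => by simp [qRotUnit_val, qRot]

theorem qRotUnit_pow (hl : l ≠ 0) (hr : r ≠ 0) (n : ℕ) :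
    qRotUnit l r ^ n = qRotUnit (l ^ n) (r ^ n) := by
  induction n with
  | zero => simp [qRotUnit_one]
  | succ n ih =>
    rw [pow_succ, ih, qRotUnit_mul (pow_ne_zero n hl) (pow_ne_zero n hr) hl hr, pow_succ, pow_succ]

theorem qRotUnit_neg_left (hl : l ≠ 0) (hr : r ≠ 0) : qRotUnit (-l) r = qRotUnit l (-r) :=
  Units.ext <| LinearMap.ext fun x => by simp [qRotUnit_val, hl, hr, qRot]

theorem commute_qRotUnit_left_right (hl : l ≠ 0) (hr : r ≠ 0) :
    Commute (qRotUnit l 1) (qRotUnit 1 r) := by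
  rw [Commute, SemiconjBy, qRotUnit_mul hl one_ne_zero one_ne_zero hr,
    qRotUnit_mul one_ne_zero hr hl one_ne_zero]
  simp

end qRotUnit

theorem hRelations_qRotUnit {a b : ℕ} (ha : a ≠ 0) (hb : b ≠ 0) :
    HRelations a b (qRotUnit (eQ a) 1) (qRotUnit 1 (eQ b)) (qRotUnit 1 jQ) (qRotUnit jQ 1) where
  commute_A_B := commute_qRotUnit_left_right (eQ_ne_zero a) (eQ_ne_zero b)
  commute_A_J := commute_qRotUnit_left_right (eQ_ne_zero a) jQ_ne_zero
  commute_B_K := (commute_qRotUnit_left_right jQ_ne_zero (eQ_ne_zero b)).symm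
  A_mul_K_mul_A := by
    rw [qRotUnit_mul (eQ_ne_zero a) one_ne_zero jQ_ne_zero one_ne_zero, mul_one,
      qRotUnit_mul (mul_ne_zero (eQ_ne_zero a) jQ_ne_zero) one_ne_zero (eQ_ne_zero a) one_ne_zero,
      mul_one, eQ_mul_jQ_mul_eQ]
  B_mul_J_mul_B := by
    rw [qRotUnit_mul one_ne_zero (eQ_ne_zero b) one_ne_zero jQ_ne_zero, mul_one,
      qRotUnit_mul one_ne_zero (mul_ne_zero (eQ_ne_zero b) jQ_ne_zero) one_ne_zero (eQ_ne_zero b),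
      mul_one, eQ_mul_jQ_mul_eQ]
  A_pow := by
    rw [qRotUnit_pow (eQ_ne_zero a) one_ne_zero, eQ_pow_self ha, one_pow,
      qRotUnit_neg_left one_ne_zero one_ne_zero, qRotUnit_pow one_ne_zero jQ_ne_zero, one_pow,
      jQ_sq]
  B_pow := by
    rw [qRotUnit_pow one_ne_zero (eQ_ne_zero b), eQ_pow_self hb, one_pow,
      qRotUnit_pow one_ne_zero jQ_ne_zero, one_pow, jQ_sq]

theorem Hgrp_conj_general (a b : ℕ) (ha : Odd a) (hb : Odd b) (k₁ k₂ : ℕ) :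
    (qRotUnit (eQ a) 1) ^ k₁ * (qRotUnit 1 (eQ b)) ^ k₂ *
        (qRotUnit 1 jQ) * (qRotUnit jQ 1) =
      ((qRotUnit (eQ a) 1) ^ (k₁ * ((a + 1) / 2)) *
          (qRotUnit 1 (eQ b)) ^ (k₂ * ((b + 1) / 2))) *
        (((qRotUnit 1 jQ) ^ 2) ^ (k₁ + k₂) * ((qRotUnit 1 jQ) * (qRotUnit jQ 1))) *
        ((qRotUnit (eQ a) 1) ^ (k₁ * ((a + 1) / 2)) *
          (qRotUnit 1 (eQ b)) ^ (k₂ * ((b + 1) / 2)))⁻¹ ∧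
    (∃ u ∈ Hgrp a b,
      (qRotUnit (eQ a) 1) ^ k₁ * (qRotUnit 1 (eQ b)) ^ k₂ *
          (qRotUnit 1 jQ) * (qRotUnit jQ 1) =
        u * (qRotUnit jQ jQ) * u⁻¹ ∨
      (qRotUnit (eQ a) 1) ^ k₁ * (qRotUnit 1 (eQ b)) ^ k₂ *
          (qRotUnit 1 jQ) * (qRotUnit jQ 1) =
        u * ((qRotUnit 1 jQ) ^ 2 * qRotUnit jQ jQ) * u⁻¹) := by
  have h := hRelations_qRotUnit ha.pos.ne' hb.pos.ne'
  have hJK : qRotUnit 1 jQ * qRotUnit jQ 1 = qRotUnit jQ jQ := by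
    rw [qRotUnit_mul one_ne_zero jQ_ne_zero jQ_ne_zero one_ne_zero, one_mul, mul_one]
  refine ⟨h.conj_eq ha hb k₁ k₂, ?_⟩
  simpa only [Hgrp, hJK] using h.exists_conj ha hb k₁ k₂

/-- In `H_{a,b}` (`a, b` odd and coprime), every element of the form
`h = [e_a,1]^{k₁}[1,e_b]^{k₂}[1,j][j,1]` satisfies
`h = h̃ · ([1,j]²)^{k₁+k₂} · [1,j][j,1] · h̃⁻¹` with
`h̃ = [e_a,1]^{k₁(a+1)/2}[1,e_b]^{k₂(b+1)/2}`; in particular it is conjugate in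
`H_{a,b}` either to `[j,j]` or to `-[j,j] = [1,j]²[j,j]`. -/
theorem Hgrp_conj (a b : ℕ) (ha : Odd a) (hb : Odd b) (hab : Nat.Coprime a b)
    (k₁ k₂ : ℕ) :
    (qRotUnit (eQ a) 1) ^ k₁ * (qRotUnit 1 (eQ b)) ^ k₂ *
        (qRotUnit 1 jQ) * (qRotUnit jQ 1) =
      ((qRotUnit (eQ a) 1) ^ (k₁ * ((a + 1) / 2)) *
          (qRotUnit 1 (eQ b)) ^ (k₂ * ((b + 1) / 2))) *
        (((qRotUnit 1 jQ) ^ 2) ^ (k₁ + k₂) * ((qRotUnit 1 jQ) * (qRotUnit jQ 1))) *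
        ((qRotUnit (eQ a) 1) ^ (k₁ * ((a + 1) / 2)) *
          (qRotUnit 1 (eQ b)) ^ (k₂ * ((b + 1) / 2)))⁻¹ ∧
    (∃ u ∈ Hgrp a b,
      (qRotUnit (eQ a) 1) ^ k₁ * (qRotUnit 1 (eQ b)) ^ k₂ *
          (qRotUnit 1 jQ) * (qRotUnit jQ 1) =
        u * (qRotUnit jQ jQ) * u⁻¹ ∨
      (qRotUnit (eQ a) 1) ^ k₁ * (qRotUnit 1 (eQ b)) ^ k₂ *
          (qRotUnit 1 jQ) * (qRotUnit jQ 1) =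
        u * ((qRotUnit 1 jQ) ^ 2 * qRotUnit jQ jQ) * u⁻¹) :=
  Hgrp_conj_general a b ha hb k₁ k₂

end
end
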